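/- arXiv:2104.05484 — 2 statements merged into one kernel-verified Lean document; each statement's English description precedes it below -/
import Mathlib

section
/- For all n×n complex Hermitian matrices A and B and every k ∈ {1, …, n}, one has Λₖ(A + B) ≥ Λₖ(A) + Λ₁(B). -/
/-!
Formalization context (from "Viscosity solutions to the first eigenvalue equation"):

* `sortedEig A k` is the `(k+1)`-st smallest eigenvalue `Λ_{k+1}(A)` of a Hermitian matrix
  `A` (eigenvalues listed in nondecreasing order with multiplicity); `lambda1 = Λ₁`,
  `lambdaTop = Λₙ`.
* `complexHessian φ z` is the complex Hessian matrix `D²_ℂ φ(z) = (∂²φ/∂z_j∂z̄_k(z))_{j,k}`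
  of a (C²) function `φ : ℂⁿ → ℝ`, expressed through the real second derivative via the
  Wirtinger formula `∂²φ/∂z_j∂z̄_k = ¼(φ_{x_j x_k} + φ_{y_j y_k}) + (i/4)(φ_{x_j y_k} - φ_{y_j x_k})`.
* Viscosity sub/supersolutions of `Λ₁(D²_ℂ u) = f` and of `G(D²_ℂ u) = f` are defined via
  `C²` test functions touching from above/below, for functions with values in
  `ℝ ∪ {-∞}` resp. `ℝ ∪ {+∞}` (modelled by `EReal`).
-/

open scoped Topology ComplexOrder
open Classical

noncomputable section

/-- The eigenvalues of the matrix `A`, sorted in nondecreasing order (with multiplicity).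
If `A` is not Hermitian, a junk value is returned.  For a Hermitian matrix `A`,
`sortedEig A k = Λ_{k+1}(A)` in the notation of the paper. -/
def sortedEig {n : ℕ} (A : Matrix (Fin n) (Fin n) ℂ) : Fin n → ℝ :=
  if hA : A.IsHermitian then hA.eigenvalues ∘ Tuple.sort hA.eigenvalues else 0

/-- `Λ₁`, the smallest eigenvalue of a Hermitian matrix. -/
def lambda1 {n : ℕ} (A : Matrix (Fin n) (Fin n) ℂ) : ℝ :=
  if hn : 0 < n then sortedEig A ⟨0, hn⟩ else 0

/-- `Λₙ`, the largest eigenvalue of a Hermitian matrix. -/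
def lambdaTop {n : ℕ} (A : Matrix (Fin n) (Fin n) ℂ) : ℝ :=
  if hn : 0 < n then sortedEig A ⟨n - 1, by omega⟩ else 0

/-- The second derivative of `φ : ℂⁿ → ℝ` at `z`, as a real bilinear form on `ℂⁿ ≅ ℝ²ⁿ`. -/
def d2 {n : ℕ} (φ : EuclideanSpace ℂ (Fin n) → ℝ) (z x y : EuclideanSpace ℂ (Fin n)) : ℝ :=
  iteratedFDeriv ℝ 2 φ z ![x, y]

/-- The complex Hessian matrix `D²_ℂ φ (z) = (∂²φ/∂z_j∂z̄_k (z))_{j,k}` of a (C²) function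
`φ : ℂⁿ → ℝ`. -/
def complexHessian {n : ℕ} (φ : EuclideanSpace ℂ (Fin n) → ℝ) (z : EuclideanSpace ℂ (Fin n)) :
    Matrix (Fin n) (Fin n) ℂ := fun j k =>
  (((d2 φ z (EuclideanSpace.single j 1) (EuclideanSpace.single k 1)
      + d2 φ z (Complex.I • EuclideanSpace.single j 1) (Complex.I • EuclideanSpace.single k 1) : ℝ) : ℂ)
    + Complex.I * ((d2 φ z (EuclideanSpace.single j 1) (Complex.I • EuclideanSpace.single k 1)
      - d2 φ z (Complex.I • EuclideanSpace.single j 1) (EuclideanSpace.single k 1) : ℝ) : ℂ)) / 4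

/-- The Laplacian of `φ : ℂⁿ → ℝ` with respect to the underlying real structure `ℝ²ⁿ`. -/
def lap {n : ℕ} (φ : EuclideanSpace ℂ (Fin n) → ℝ) (z : EuclideanSpace ℂ (Fin n)) : ℝ :=
  ∑ j : Fin n, (d2 φ z (EuclideanSpace.single j 1) (EuclideanSpace.single j 1)
    + d2 φ z (Complex.I • EuclideanSpace.single j 1) (Complex.I • EuclideanSpace.single j 1))

/-- `u : Ω → ℝ ∪ {-∞}` is a viscosity subsolution of `Λ₁(D²_ℂ u) = f` in `Ω`:
`u` is upper semicontinuous on `Ω`, `u ≢ -∞`, and for every `z₀ ∈ Ω` and every `C²`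
function `φ` touching `u` from above at `z₀` one has `Λ₁(D²_ℂ φ(z₀)) ≥ f(z₀)`. -/
def IsViscositySubsolution {n : ℕ} (Ω : Set (EuclideanSpace ℂ (Fin n)))
    (f : EuclideanSpace ℂ (Fin n) → ℝ) (u : EuclideanSpace ℂ (Fin n) → EReal) : Prop :=
  UpperSemicontinuousOn u Ω ∧ (∃ z ∈ Ω, u z ≠ ⊥) ∧
  ∀ z₀ ∈ Ω, ∀ φ : EuclideanSpace ℂ (Fin n) → ℝ, ContDiffAt ℝ 2 φ z₀ →
    (φ z₀ : EReal) = u z₀ → (∀ᶠ z in 𝓝[Ω] z₀, u z ≤ (φ z : EReal)) →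
    f z₀ ≤ lambda1 (complexHessian φ z₀)

/-- `v : Ω → ℝ ∪ {+∞}` is a viscosity supersolution of `Λ₁(D²_ℂ u) = f` in `Ω`:
`v` is lower semicontinuous on `Ω`, `v ≢ +∞`, and for every `z₀ ∈ Ω` and every `C²`
function `ψ` touching `v` from below at `z₀` one has `max(Λ₁(D²_ℂ ψ(z₀)), 0) ≤ f(z₀)`. -/
def IsViscositySupersolution {n : ℕ} (Ω : Set (EuclideanSpace ℂ (Fin n)))
    (f : EuclideanSpace ℂ (Fin n) → ℝ) (v : EuclideanSpace ℂ (Fin n) → EReal) : Prop :=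
  LowerSemicontinuousOn v Ω ∧ (∃ z ∈ Ω, v z ≠ ⊤) ∧
  ∀ z₀ ∈ Ω, ∀ ψ : EuclideanSpace ℂ (Fin n) → ℝ, ContDiffAt ℝ 2 ψ z₀ →
    (ψ z₀ : EReal) = v z₀ → (∀ᶠ z in 𝓝[Ω] z₀, (ψ z : EReal) ≤ v z) →
    max (lambda1 (complexHessian ψ z₀)) 0 ≤ f z₀

/-- The upper semicontinuous envelope `g*` (relative to the set `S`) of `g`:
`g*(z) = inf_{r>0} sup {g(y) : y ∈ B(z,r) ∩ S}`. -/
def uscEnvOn {n : ℕ} (S : Set (EuclideanSpace ℂ (Fin n))) (g : EuclideanSpace ℂ (Fin n) → ℝ)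
    (z : EuclideanSpace ℂ (Fin n)) : ℝ :=
  ⨅ r : {r : ℝ // 0 < r}, sSup (g '' (Metric.ball z (r : ℝ) ∩ S))

/-- The lower semicontinuous envelope `g_*` (relative to the set `S`) of `g`:
`g_*(z) = sup_{r>0} inf {g(y) : y ∈ B(z,r) ∩ S}`. -/
def lscEnvOn {n : ℕ} (S : Set (EuclideanSpace ℂ (Fin n))) (g : EuclideanSpace ℂ (Fin n) → ℝ)
    (z : EuclideanSpace ℂ (Fin n)) : ℝ :=
  ⨆ r : {r : ℝ // 0 < r}, sInf (g '' (Metric.ball z (r : ℝ) ∩ S))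

/-- The upper semicontinuous envelope of an `EReal`-valued function relative to `S`. -/
def uscEnvE {n : ℕ} (S : Set (EuclideanSpace ℂ (Fin n))) (g : EuclideanSpace ℂ (Fin n) → EReal)
    (z : EuclideanSpace ℂ (Fin n)) : EReal :=
  ⨅ r : {r : ℝ // 0 < r}, ⨆ y ∈ Metric.ball z (r : ℝ) ∩ S, g y

/-- A bounded domain `Ω ⊂ ℂⁿ` is `B`-regular, formalized through Sibony's
characterization (ii): `Ω` carries a smooth negative exhaustion function `ψ`, tending to
`0` at `∂Ω`, whose complex Hessian satisfies `D²_ℂ ψ ≥ I` on `Ω`. -/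
def IsBRegular {n : ℕ} (Ω : Set (EuclideanSpace ℂ (Fin n))) : Prop :=
  ∃ ψ : EuclideanSpace ℂ (Fin n) → ℝ, ContDiffOn ℝ (⊤ : ℕ∞) ψ Ω ∧ (∀ z ∈ Ω, ψ z < 0) ∧
    (∀ z₀ ∈ frontier Ω, Filter.Tendsto ψ (𝓝[Ω] z₀) (𝓝 0)) ∧
    ∀ z ∈ Ω, (complexHessian ψ z - 1).PosSemidef

/-- `w` is plurisubharmonic on the open set `Ω` (viscosity characterization, equivalent
to the classical one for upper semicontinuous functions): `w` is upper semicontinuous on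
`Ω` and every `C²` function `q` touching `w` from above at a point `z₀ ∈ Ω` has positive
semidefinite complex Hessian at `z₀`, i.e. `dd^c w ≥ 0` holds in the viscosity sense. -/
def IsPshOn {n : ℕ} (Ω : Set (EuclideanSpace ℂ (Fin n))) (w : EuclideanSpace ℂ (Fin n) → ℝ) :
    Prop :=
  UpperSemicontinuousOn w Ω ∧
  ∀ z₀ ∈ Ω, ∀ q : EuclideanSpace ℂ (Fin n) → ℝ, ContDiffAt ℝ 2 q z₀ → q z₀ = w z₀ →
    (∀ᶠ z in 𝓝[Ω] z₀, w z ≤ q z) → (complexHessian q z₀).PosSemidef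

/-- The Hermitian `(1,1)`-part `Q^{1,1}` of a real bilinear (quadratic) form `Q` on
`ℂⁿ ≅ ℝ²ⁿ`: the Hermitian matrix `H` with `⟨Z, HZ⟩ = ½(Q(Z,Z) + Q(iZ,iZ))`. -/
def hermPart {n : ℕ}
    (Q : EuclideanSpace ℂ (Fin n) →ₗ[ℝ] EuclideanSpace ℂ (Fin n) →ₗ[ℝ] ℝ) :
    Matrix (Fin n) (Fin n) ℂ := fun j k =>
  (((Q (EuclideanSpace.single j 1) (EuclideanSpace.single k 1)
      + Q (Complex.I • EuclideanSpace.single j 1) (Complex.I • EuclideanSpace.single k 1) : ℝ) : ℂ)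
    + Complex.I * ((Q (EuclideanSpace.single j 1) (Complex.I • EuclideanSpace.single k 1)
      - Q (Complex.I • EuclideanSpace.single j 1) (EuclideanSpace.single k 1) : ℝ) : ℂ)) / 2

/-- `𝓒 ⊆ ℍⁿ` is a nonempty open cone of Hermitian matrices containing the positive
definite cone `𝓒ₙ` (openness is relative to the real subspace of Hermitian matrices). -/
def IsHermitianCone {n : ℕ} (C : Set (Matrix (Fin n) (Fin n) ℂ)) : Prop :=
  C.Nonempty ∧ (∀ A ∈ C, A.IsHermitian) ∧
  (∃ U : Set (Matrix (Fin n) (Fin n) ℂ), IsOpen U ∧ C = U ∩ {A | A.IsHermitian}) ∧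
  (∀ A ∈ C, ∀ t : ℝ, 0 < t → (t : ℂ) • A ∈ C) ∧
  (∀ A : Matrix (Fin n) (Fin n) ℂ, A.PosDef → A ∈ C)

/-- `u : Ω → ℝ ∪ {-∞}` is a viscosity subsolution of `G(D²_ℂ u) = f` in `Ω`, for an
operator `G` defined on the closure of the cone `C`. -/
def IsGSubsolution {n : ℕ} (C : Set (Matrix (Fin n) (Fin n) ℂ))
    (G : Matrix (Fin n) (Fin n) ℂ → ℝ) (Ω : Set (EuclideanSpace ℂ (Fin n)))
    (f : EuclideanSpace ℂ (Fin n) → ℝ) (u : EuclideanSpace ℂ (Fin n) → EReal) : Prop :=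
  UpperSemicontinuousOn u Ω ∧ (∃ z ∈ Ω, u z ≠ ⊥) ∧
  ∀ z₀ ∈ Ω, ∀ φ : EuclideanSpace ℂ (Fin n) → ℝ, ContDiffAt ℝ 2 φ z₀ →
    (φ z₀ : EReal) = u z₀ → (∀ᶠ z in 𝓝[Ω] z₀, u z ≤ (φ z : EReal)) →
    complexHessian φ z₀ ∈ closure C ∧ f z₀ ≤ G (complexHessian φ z₀)

/-- `v : Ω → ℝ ∪ {+∞}` is a viscosity supersolution of `G(D²_ℂ u) = f` in `Ω`, for an
operator `G` defined on the closure of the cone `C`. -/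
def IsGSupersolution {n : ℕ} (C : Set (Matrix (Fin n) (Fin n) ℂ))
    (G : Matrix (Fin n) (Fin n) ℂ → ℝ) (Ω : Set (EuclideanSpace ℂ (Fin n)))
    (f : EuclideanSpace ℂ (Fin n) → ℝ) (v : EuclideanSpace ℂ (Fin n) → EReal) : Prop :=
  LowerSemicontinuousOn v Ω ∧ (∃ z ∈ Ω, v z ≠ ⊤) ∧
  ∀ z₀ ∈ Ω, ∀ ψ : EuclideanSpace ℂ (Fin n) → ℝ, ContDiffAt ℝ 2 ψ z₀ →
    (ψ z₀ : EReal) = v z₀ → (∀ᶠ z in 𝓝[Ω] z₀, (ψ z : EReal) ≤ v z) →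
    complexHessian ψ z₀ ∈ closure C → G (complexHessian ψ z₀) ≤ f z₀


namespace WeylAux
open Matrix Finset Module Submodule

variable {n : ℕ}

lemma apply_basis (A : Matrix (Fin n) (Fin n) ℂ) (hA : A.IsHermitian) (j : Fin n) :
    Matrix.toEuclideanLin A (hA.eigenvectorBasis j)
      = (hA.eigenvalues j : ℂ) • hA.eigenvectorBasis j := by
  have h := hA.mulVec_eigenvectorBasis j
  apply (WithLp.equiv 2 _).injective
  simpa using h

lemma re_inner_eq_sum (A : Matrix (Fin n) (Fin n) ℂ) (hA : A.IsHermitian)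
    (x : EuclideanSpace ℂ (Fin n)) :
    RCLike.re (inner (𝕜 := ℂ) x (Matrix.toEuclideanLin A x)) =
      ∑ i, hA.eigenvalues i * ‖hA.eigenvectorBasis.repr x i‖ ^ 2 := by
  set b := hA.eigenvectorBasis
  have hx : Matrix.toEuclideanLin A x = ∑ i, b.repr x i • ((hA.eigenvalues i : ℂ) • b i) := by
    conv_lhs => rw [← b.sum_repr x]
    rw [map_sum]
    refine Finset.sum_congr rfl fun i _ => ?_
    rw [_root_.map_smul, apply_basis A hA i]
  rw [hx, inner_sum]
  rw [map_sum]
  refine Finset.sum_congr rfl fun i _ => ?_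
  rw [inner_smul_right, inner_smul_right]
  have hbx : inner (𝕜 := ℂ) x (b i) = starRingEnd ℂ (b.repr x i) := by
    rw [b.repr_apply_apply, inner_conj_symm]
  rw [hbx]
  have hring : b.repr x i * ((hA.eigenvalues i : ℂ) * starRingEnd ℂ (b.repr x i))
      = (hA.eigenvalues i : ℂ) * (b.repr x i * starRingEnd ℂ (b.repr x i)) := by ring
  rw [hring, RCLike.mul_conj]
  simp [RCLike.mul_re]
  left
  rw [← Complex.ofReal_pow, Complex.ofReal_re]

lemma norm_sq_eq_sum (A : Matrix (Fin n) (Fin n) ℂ) (hA : A.IsHermitian)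
    (x : EuclideanSpace ℂ (Fin n)) :
    ‖x‖ ^ 2 = ∑ i, ‖hA.eigenvectorBasis.repr x i‖ ^ 2 := by
  rw [← hA.eigenvectorBasis.repr.norm_map x, EuclideanSpace.norm_eq,
    Real.sq_sqrt (Finset.sum_nonneg fun i _ => sq_nonneg _)]

lemma bound_lower (A : Matrix (Fin n) (Fin n) ℂ) (hA : A.IsHermitian)
    (S : Finset (Fin n)) (c : ℝ) (hc : ∀ i ∈ S, c ≤ hA.eigenvalues i)
    (x : EuclideanSpace ℂ (Fin n)) (hx : ∀ i ∉ S, hA.eigenvectorBasis.repr x i = 0) :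
    c * ‖x‖ ^ 2 ≤ RCLike.re (inner (𝕜 := ℂ) x (Matrix.toEuclideanLin A x)) := by
  rw [re_inner_eq_sum A hA x, norm_sq_eq_sum A hA x, Finset.mul_sum]
  refine Finset.sum_le_sum fun i _ => ?_
  by_cases hi : i ∈ S
  · exact mul_le_mul_of_nonneg_right (hc i hi) (sq_nonneg _)
  · rw [hx i hi]; simp

lemma bound_upper (A : Matrix (Fin n) (Fin n) ℂ) (hA : A.IsHermitian)
    (S : Finset (Fin n)) (c : ℝ) (hc : ∀ i ∈ S, hA.eigenvalues i ≤ c)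
    (x : EuclideanSpace ℂ (Fin n)) (hx : ∀ i ∉ S, hA.eigenvectorBasis.repr x i = 0) :
    RCLike.re (inner (𝕜 := ℂ) x (Matrix.toEuclideanLin A x)) ≤ c * ‖x‖ ^ 2 := by
  rw [re_inner_eq_sum A hA x, norm_sq_eq_sum A hA x, Finset.mul_sum]
  refine Finset.sum_le_sum fun i _ => ?_
  by_cases hi : i ∈ S
  · exact mul_le_mul_of_nonneg_right (hc i hi) (sq_nonneg _)
  · rw [hx i hi]; simp

lemma repr_eq_zero (A : Matrix (Fin n) (Fin n) ℂ) (hA : A.IsHermitian)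
    (S : Finset (Fin n)) (x : EuclideanSpace ℂ (Fin n))
    (hx : x ∈ Submodule.span ℂ ((S.image hA.eigenvectorBasis : Finset _) : Set _))
    {j : Fin n} (hj : j ∉ S) : hA.eigenvectorBasis.repr x j = 0 := by
  set b := hA.eigenvectorBasis
  rw [b.repr_apply_apply]
  induction hx using Submodule.span_induction with
  | mem y hy =>
      rcases Finset.mem_coe.mp hy with hy'
      rcases Finset.mem_image.mp hy' with ⟨i, hi, rfl⟩
      exact b.orthonormal.2 (fun h => hj (h ▸ hi))
  | zero => simp
  | add y z hy hz ihy ihz => rw [inner_add_right, ihy, ihz, add_zero]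
  | smul a y hy ihy => rw [inner_smul_right, ihy, mul_zero]

lemma finrank_span_eig (A : Matrix (Fin n) (Fin n) ℂ) (hA : A.IsHermitian)
    (S : Finset (Fin n)) :
    finrank ℂ (Submodule.span ℂ ((S.image hA.eigenvectorBasis : Finset _) :
      Set (EuclideanSpace ℂ (Fin n)))) = S.card := by
  set b := hA.eigenvectorBasis
  have li := b.orthonormal.linearIndependent
  have binj : Function.Injective b := li.injective
  have li2 : LinearIndependent ℂ (fun i : {i // i ∈ S} => b i) :=
    li.comp _ Subtype.val_injective
  have hrange : Set.range (fun i : {i // i ∈ S} => b i)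
      = ((S.image b : Finset _) : Set _) := by
    ext y; simp
  rw [finrank_span_finset_eq_card, Finset.card_image_of_injective _ binj]
  have h2 := li2.linearIndepOn_id
  rwa [hrange] at h2

lemma sortedEig_le_eig (A : Matrix (Fin n) (Fin n) ℂ) (hA : A.IsHermitian) (k j : Fin n)
    (hkj : k ≤ j) : sortedEig A k ≤ hA.eigenvalues (Tuple.sort hA.eigenvalues j) := by
  rw [sortedEig, dif_pos hA]
  exact Tuple.monotone_sort hA.eigenvalues hkj

lemma lambda1_le (B : Matrix (Fin n) (Fin n) ℂ) (hB : B.IsHermitian) (hn : 0 < n)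
    (i : Fin n) : lambda1 B ≤ hB.eigenvalues i := by
  rw [lambda1, dif_pos hn]
  have := sortedEig_le_eig B hB ⟨0, hn⟩ ((Tuple.sort hB.eigenvalues).symm i) (Fin.mk_le_of_le_val (Nat.zero_le _))
  simpa using this

lemma eig_le_sortedEig (A : Matrix (Fin n) (Fin n) ℂ) (hA : A.IsHermitian) (k j : Fin n)
    (hjk : j ≤ k) : hA.eigenvalues (Tuple.sort hA.eigenvalues j) ≤ sortedEig A k := by
  rw [sortedEig, dif_pos hA]
  exact Tuple.monotone_sort hA.eigenvalues hjk

end WeylAux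

/-- **Weyl's inequality, lower form.**  For Hermitian `A`, `B` and every
`k`, `Λₖ(A + B) ≥ Λₖ(A) + Λ₁(B)`. -/
theorem eigenvalue_add_ge {n : ℕ} (A B : Matrix (Fin n) (Fin n) ℂ)
    (hA : A.IsHermitian) (hB : B.IsHermitian) (k : Fin n) :
    sortedEig A k + lambda1 B ≤ sortedEig (A + B) k := by
  have hn : 0 < n := k.pos
  have hAB : (A + B).IsHermitian := hA.add hB
  classical
  set Stop : Finset (Fin n) := Finset.univ.filter (fun i => sortedEig A k ≤ hA.eigenvalues i)
    with hStopDef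
  set Sbot : Finset (Fin n) :=
    Finset.univ.filter (fun i => hAB.eigenvalues i ≤ sortedEig (A + B) k) with hSbotDef
  have hStop : n - k.val ≤ Stop.card := by
    have hsub : (Finset.Ici k).image (Tuple.sort hA.eigenvalues) ⊆ Stop := by
      intro i hi
      rcases Finset.mem_image.mp hi with ⟨j, hj, rfl⟩
      simp only [hStopDef, Finset.mem_filter, Finset.mem_univ, true_and]
      exact WeylAux.sortedEig_le_eig A hA k j (Finset.mem_Ici.mp hj)
    calc n - k.val = (Finset.Ici k).card := (Fin.card_Ici k).symm
    _ = ((Finset.Ici k).image (Tuple.sort hA.eigenvalues)).card :=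
        (Finset.card_image_of_injective _ (Tuple.sort hA.eigenvalues).injective).symm
    _ ≤ Stop.card := Finset.card_le_card hsub
  have hSbot : k.val + 1 ≤ Sbot.card := by
    have hsub : (Finset.Iic k).image (Tuple.sort hAB.eigenvalues) ⊆ Sbot := by
      intro i hi
      rcases Finset.mem_image.mp hi with ⟨j, hj, rfl⟩
      simp only [hSbotDef, Finset.mem_filter, Finset.mem_univ, true_and]
      exact WeylAux.eig_le_sortedEig (A + B) hAB k j (Finset.mem_Iic.mp hj)
    calc k.val + 1 = (Finset.Iic k).card := (Fin.card_Iic k).symm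
    _ = ((Finset.Iic k).image (Tuple.sort hAB.eigenvalues)).card :=
        (Finset.card_image_of_injective _ (Tuple.sort hAB.eigenvalues).injective).symm
    _ ≤ Sbot.card := Finset.card_le_card hsub
  set T := Submodule.span ℂ ((Stop.image hA.eigenvectorBasis : Finset _) :
    Set (EuclideanSpace ℂ (Fin n))) with hTdef
  set W := Submodule.span ℂ ((Sbot.image hAB.eigenvectorBasis : Finset _) :
    Set (EuclideanSpace ℂ (Fin n))) with hWdef
  have hT : Module.finrank ℂ T = Stop.card := WeylAux.finrank_span_eig A hA Stop
  have hW : Module.finrank ℂ W = Sbot.card := WeylAux.finrank_span_eig (A + B) hAB Sbot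
  have hpos : 0 < Module.finrank ℂ ↥(T ⊓ W) := by
    by_contra h
    have hs := Submodule.finrank_sup_add_finrank_inf_eq T W
    have h1 : Module.finrank ℂ ↥(T ⊔ W) ≤ n := by
      have := Submodule.finrank_le (T ⊔ W)
      simpa using this
    have hk : k.val < n := k.isLt
    omega
  obtain ⟨x, hxne⟩ := Module.finrank_pos_iff_exists_ne_zero.mp hpos
  set y : EuclideanSpace ℂ (Fin n) := (x : EuclideanSpace ℂ (Fin n)) with hydef
  have hy0 : y ≠ 0 := fun h => hxne (Subtype.ext h)
  have hyT : y ∈ T := x.2.1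
  have hyW : y ∈ W := x.2.2
  have hnorm : 0 < ‖y‖ ^ 2 := pow_pos (norm_pos_iff.mpr hy0) 2
  have h1 : sortedEig A k * ‖y‖ ^ 2
      ≤ RCLike.re (inner (𝕜 := ℂ) y (Matrix.toEuclideanLin A y)) :=
    WeylAux.bound_lower A hA Stop _ (fun i hi => (Finset.mem_filter.mp hi).2) y
      (fun i hi => WeylAux.repr_eq_zero A hA Stop y hyT hi)
  have h2 : lambda1 B * ‖y‖ ^ 2
      ≤ RCLike.re (inner (𝕜 := ℂ) y (Matrix.toEuclideanLin B y)) :=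
    WeylAux.bound_lower B hB Finset.univ _ (fun i _ => WeylAux.lambda1_le B hB hn i) y
      (fun i hi => absurd (Finset.mem_univ i) hi)
  have h3 : RCLike.re (inner (𝕜 := ℂ) y (Matrix.toEuclideanLin (A + B) y))
      ≤ sortedEig (A + B) k * ‖y‖ ^ 2 :=
    WeylAux.bound_upper (A + B) hAB Sbot _ (fun i hi => (Finset.mem_filter.mp hi).2) y
      (fun i hi => WeylAux.repr_eq_zero (A + B) hAB Sbot y hyW hi)
  have hadd : inner (𝕜 := ℂ) y (Matrix.toEuclideanLin (A + B) y)
      = inner (𝕜 := ℂ) y (Matrix.toEuclideanLin A y)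
        + inner (𝕜 := ℂ) y (Matrix.toEuclideanLin B y) := by
    rw [map_add, LinearMap.add_apply, inner_add_right]
  have hmain : (sortedEig A k + lambda1 B) * ‖y‖ ^ 2 ≤ sortedEig (A + B) k * ‖y‖ ^ 2 := by
    rw [add_mul]
    refine le_trans (add_le_add h1 h2) (le_trans (le_of_eq ?_) h3)
    rw [hadd, map_add]
  exact le_of_mul_le_mul_right hmain hnorm

end
end

section
/- Let Ω ⊂ ℂⁿ be a bounded domain and f: Ω̄ → ℝ a positive continuous function. Let ψ be a smooth plurisubharmonic function on Ω whose complex Hessian satisfies Λ₁(D²_ℂψ(z)) ≥ 1 for all z ∈ Ω, and let φ̃ ∈ PSH(Ω) ∩ C(Ω̄). If B ≥ sup_{Ω̄} f, then the function u = Bψ + φ̃ is a viscosity subsolution of Λ₁(D²_ℂ u) = f in Ω. -/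
/-!
Formalization context (from "Viscosity solutions to the first eigenvalue equation"):

* `sortedEig A k` is the `(k+1)`-st smallest eigenvalue `Λ_{k+1}(A)` of a Hermitian matrix
  `A` (eigenvalues listed in nondecreasing order with multiplicity); `lambda1 = Λ₁`,
  `lambdaTop = Λₙ`.
* `complexHessian φ z` is the complex Hessian matrix `D²_ℂ φ(z) = (∂²φ/∂z_j∂z̄_k(z))_{j,k}`
  of a (C²) function `φ : ℂⁿ → ℝ`, expressed through the real second derivative via the
  Wirtinger formula `∂²φ/∂z_j∂z̄_k = ¼(φ_{x_j x_k} + φ_{y_j y_k}) + (i/4)(φ_{x_j y_k} - φ_{y_j x_k})`.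
* Viscosity sub/supersolutions of `Λ₁(D²_ℂ u) = f` and of `G(D²_ℂ u) = f` are defined via
  `C²` test functions touching from above/below, for functions with values in
  `ℝ ∪ {-∞}` resp. `ℝ ∪ {+∞}` (modelled by `EReal`).
-/

open scoped Topology ComplexOrder
open Classical

noncomputable section

section Aux

open Matrix

lemma posSemidef_real_smul {n : ℕ} {A : Matrix (Fin n) (Fin n) ℂ} (hA : A.PosSemidef)
    {c : ℝ} (hc : 0 ≤ c) : ((c : ℂ) • A).PosSemidef := by
  refine Matrix.PosSemidef.of_dotProduct_mulVec_nonneg ?_ ?_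
  · unfold Matrix.IsHermitian
    rw [Matrix.conjTranspose_smul, hA.1.eq]
    simp [Complex.star_def, Complex.conj_ofReal]
  · intro x
    rw [Matrix.smul_mulVec, dotProduct_smul, smul_eq_mul]
    exact mul_nonneg (by exact_mod_cast Complex.zero_le_real.mpr hc) (hA.dotProduct_mulVec_nonneg x)

lemma eigenvalues_le_iff {n : ℕ} {A : Matrix (Fin n) (Fin n) ℂ} (hA : A.IsHermitian) (c : ℝ) :
    (A - (c : ℂ) • 1).PosSemidef ↔ ∀ i, c ≤ hA.eigenvalues i := by
  constructor
  · intro h i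
    have hnorm : ‖hA.eigenvectorBasis i‖ = 1 := hA.eigenvectorBasis.orthonormal.1 i
    have hev := hA.mulVec_eigenvectorBasis i
    set v : Fin n → ℂ := ⇑(hA.eigenvectorBasis i) with hv
    have hvv : dotProduct (star v) v = 1 := by
      have h1 : (inner ℂ (hA.eigenvectorBasis i) (hA.eigenvectorBasis i) : ℂ) = 1 := by
        rw [inner_self_eq_norm_sq_to_K, hnorm]; norm_num
      rw [dotProduct_comm]
      exact h1
    have hmul : (A - (c : ℂ) • 1) *ᵥ v = ((hA.eigenvalues i - c : ℝ) : ℂ) • v := by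
      rw [Matrix.sub_mulVec, Matrix.smul_mulVec, Matrix.one_mulVec, hev,
        ← Complex.coe_smul, ← sub_smul, ← Complex.ofReal_sub]
    have h0 := h.dotProduct_mulVec_nonneg v
    rw [hmul, dotProduct_smul, hvv, smul_eq_mul, mul_one] at h0
    have := Complex.zero_le_real.mp h0
    linarith
  · intro h
    have hU : (hA.eigenvectorUnitary : Matrix (Fin n) (Fin n) ℂ)
        * star (hA.eigenvectorUnitary : Matrix (Fin n) (Fin n) ℂ) = 1 :=
      Matrix.mem_unitaryGroup_iff.mp hA.eigenvectorUnitary.2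
    have key : A - (c : ℂ) • 1 = (hA.eigenvectorUnitary : Matrix (Fin n) (Fin n) ℂ)
        * Matrix.diagonal (fun i => ((hA.eigenvalues i - c : ℝ) : ℂ))
        * star (hA.eigenvectorUnitary : Matrix (Fin n) (Fin n) ℂ) := by
      have hdiag : Matrix.diagonal (fun i => ((hA.eigenvalues i - c : ℝ) : ℂ))
          = Matrix.diagonal (RCLike.ofReal ∘ hA.eigenvalues) - (c : ℂ) • 1 := by
        rw [Matrix.smul_one_eq_diagonal, Matrix.diagonal_sub]
        congr 1
        funext i
        push_cast
        rfl
      rw [hdiag, Matrix.mul_sub, Matrix.sub_mul, ← Unitary.conjStarAlgAut_apply (S := ℂ) hA.eigenvectorUnitary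
        (Matrix.diagonal (RCLike.ofReal ∘ hA.eigenvalues)), ← hA.spectral_theorem]
      congr 1
      rw [Matrix.mul_smul, Matrix.smul_mul, mul_one, hU]
    rw [key, Matrix.star_eq_conjTranspose]
    exact (Matrix.posSemidef_diagonal_iff.mpr fun i =>
      Complex.zero_le_real.mpr (by linarith [h i])).mul_mul_conjTranspose_same _

lemma le_lambda1_iff {n : ℕ} (hn : 0 < n) {A : Matrix (Fin n) (Fin n) ℂ}
    (hA : A.IsHermitian) (c : ℝ) :
    c ≤ lambda1 A ↔ ∀ i, c ≤ hA.eigenvalues i := by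
  unfold lambda1 sortedEig
  rw [dif_pos hn, dif_pos hA]
  constructor
  · intro h i
    have h0 : (⟨0, hn⟩ : Fin n) ≤ (Tuple.sort hA.eigenvalues)⁻¹ i := by
      simp [Fin.le_def]
    have hmono := Tuple.monotone_sort hA.eigenvalues h0
    have heq : (hA.eigenvalues ∘ Tuple.sort hA.eigenvalues) ((Tuple.sort hA.eigenvalues)⁻¹ i)
        = hA.eigenvalues i := by
      simp [Function.comp]
    rw [heq] at hmono
    linarith
  · intro h
    exact h _

set_option maxHeartbeats 800000 in
lemma d2_decomp {n : ℕ} {s : Set (EuclideanSpace ℂ (Fin n))} (hs : IsOpen s)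
    {z₀ : EuclideanSpace ℂ (Fin n)} (hz : z₀ ∈ s)
    {q ψ : EuclideanSpace ℂ (Fin n) → ℝ} (hq : ContDiffOn ℝ 2 q s) (hψ : ContDiffOn ℝ 2 ψ s)
    (B : ℝ) (x y : EuclideanSpace ℂ (Fin n)) :
    d2 (fun z => q z + B * ψ z) z₀ x y = d2 q z₀ x y + B * d2 ψ z₀ x y := by
  have hBψ : ContDiffOn ℝ 2 (fun z => B * ψ z) s := contDiffOn_const.mul hψ
  have h1 : ∀ g : EuclideanSpace ℂ (Fin n) → ℝ,
      iteratedFDeriv ℝ 2 g z₀ = iteratedFDerivWithin ℝ 2 g s z₀ := fun g =>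
    (iteratedFDerivWithin_of_isOpen 2 hs hz).symm
  have hadd := iteratedFDerivWithin_add_apply' (𝕜 := ℝ) (f := q) (g := fun z => B * ψ z)
    (i := 2) (hq z₀ hz) (hBψ z₀ hz) hs.uniqueDiffOn hz
  have hfun : (fun z => B * ψ z) = B • ψ := rfl
  have h2 : iteratedFDerivWithin ℝ 2 (fun z => B * ψ z) s z₀
      = B • iteratedFDerivWithin ℝ 2 ψ s z₀ := by
    rw [hfun]
    exact iteratedFDerivWithin_const_smul_apply (a := B) (f := ψ) (hψ z₀ hz) hs.uniqueDiffOn hz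
  unfold d2
  rw [h1 (fun z => q z + B * ψ z), h1 q, h1 ψ, hadd, h2,
    ContinuousMultilinearMap.add_apply, ContinuousMultilinearMap.smul_apply, smul_eq_mul]

lemma complexHessian_decomp {n : ℕ} {s : Set (EuclideanSpace ℂ (Fin n))} (hs : IsOpen s)
    {z₀ : EuclideanSpace ℂ (Fin n)} (hz : z₀ ∈ s)
    {q ψ : EuclideanSpace ℂ (Fin n) → ℝ} (hq : ContDiffOn ℝ 2 q s) (hψ : ContDiffOn ℝ 2 ψ s)
    (B : ℝ) :
    complexHessian (fun z => q z + B * ψ z) z₀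
      = complexHessian q z₀ + (B : ℂ) • complexHessian ψ z₀ := by
  funext j k
  simp only [complexHessian, Matrix.add_apply, Matrix.smul_apply,
    d2_decomp hs hz hq hψ B, smul_eq_mul]
  push_cast
  ring

end Aux

/-- **construction of a subsolution.**  Let `Ω ⊂ ℂⁿ` be a bounded domain,
`f` positive continuous on `Ω̄`, `ψ` a smooth plurisubharmonic function on `Ω` with
`Λ₁(D²_ℂ ψ) ≥ 1` on `Ω`, and `φ̃ ∈ PSH(Ω) ∩ C(Ω̄)`.  If `B ≥ sup_Ω̄ f`, then
`u = Bψ + φ̃` is a viscosity subsolution of `Λ₁(D²_ℂ u) = f` in `Ω`. -/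
theorem subsolution_from_psh {n : ℕ} (hn : 0 < n)
    (Ω : Set (EuclideanSpace ℂ (Fin n)))
    (hΩ : IsOpen Ω) (hconn : IsConnected Ω) (hbdd : Bornology.IsBounded Ω)
    (f : EuclideanSpace ℂ (Fin n) → ℝ) (hf : ContinuousOn f (closure Ω))
    (hfpos : ∀ z ∈ closure Ω, 0 < f z)
    (ψ : EuclideanSpace ℂ (Fin n) → ℝ) (hψ_smooth : ContDiffOn ℝ (⊤ : ℕ∞) ψ Ω)
    (hψ_psh : ∀ z ∈ Ω, (complexHessian ψ z).PosSemidef)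
    (hψ_eig : ∀ z ∈ Ω, 1 ≤ lambda1 (complexHessian ψ z))
    (φt : EuclideanSpace ℂ (Fin n) → ℝ)
    (hφt_cont : ContinuousOn φt (closure Ω)) (hφt_psh : IsPshOn Ω φt)
    (B : ℝ) (hB : ∀ z ∈ closure Ω, f z ≤ B) :
    IsViscositySubsolution Ω f (fun z => ((B * ψ z + φt z : ℝ) : EReal)) := by
  refine ⟨?_, ?_, ?_⟩
  · have hc : ContinuousOn (fun z => B * ψ z + φt z) Ω :=
      (continuousOn_const.mul (hψ_smooth.continuousOn)).add (hφt_cont.mono subset_closure)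
    exact (continuous_coe_real_ereal.comp_continuousOn hc).upperSemicontinuousOn
  · obtain ⟨z, hz⟩ := hconn.nonempty
    exact ⟨z, hz, EReal.coe_ne_bot _⟩
  · intro z₀ hz₀ φ hφ hφ0 hφge
    obtain ⟨t, ht, hφC2⟩ := hφ.contDiffOn le_rfl (by simp)
    set s : Set (EuclideanSpace ℂ (Fin n)) := interior t ∩ Ω with hsdef
    have hs : IsOpen s := isOpen_interior.inter hΩ
    have hzs : z₀ ∈ s := ⟨mem_interior_iff_mem_nhds.2 ht, hz₀⟩
    have hφs : ContDiffOn ℝ 2 φ s :=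
      hφC2.mono (Set.inter_subset_left.trans interior_subset)
    have hψs : ContDiffOn ℝ 2 ψ s :=
      (hψ_smooth.of_le (WithTop.coe_le_coe.mpr le_top)).mono Set.inter_subset_right
    set q : EuclideanSpace ℂ (Fin n) → ℝ := fun z => φ z - B * ψ z with hqdef
    have hqs : ContDiffOn ℝ 2 q s := hφs.sub (contDiffOn_const.mul hψs)
    have hqat : ContDiffAt ℝ 2 q z₀ := hqs.contDiffAt (hs.mem_nhds hzs)
    have hval : φ z₀ = B * ψ z₀ + φt z₀ := EReal.coe_eq_coe_iff.mp hφ0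
    have hq0 : q z₀ = φt z₀ := by simp only [hqdef]; linarith
    have hqge : ∀ᶠ z in 𝓝[Ω] z₀, φt z ≤ q z := by
      filter_upwards [hφge] with z h
      have := EReal.coe_le_coe_iff.mp h
      simp only [hqdef]
      linarith
    have hHq := hφt_psh.2 z₀ hz₀ q hqat hq0 hqge
    have hHψ := hψ_psh z₀ hz₀
    have hdec : complexHessian φ z₀
        = complexHessian q z₀ + (B : ℂ) • complexHessian ψ z₀ := by
      have hφeq : φ = fun z => q z + B * ψ z := funext fun z => by
        simp only [hqdef]; ring
      rw [hφeq, complexHessian_decomp hs hzs hqs hψs]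
    have hBH : ((B : ℂ) • complexHessian ψ z₀).IsHermitian := by
      unfold Matrix.IsHermitian
      rw [Matrix.conjTranspose_smul, hHψ.1.eq]
      simp [Complex.star_def, Complex.conj_ofReal]
    have hA : (complexHessian φ z₀).IsHermitian := by
      rw [hdec]; exact hHq.1.add hBH
    set c : ℝ := f z₀ with hcdef
    have hc : 0 < c := hfpos z₀ (subset_closure hz₀)
    have hcB : c ≤ B := hB z₀ (subset_closure hz₀)
    have heigψ : ∀ i, (1 : ℝ) ≤ hHψ.1.eigenvalues i :=
      (le_lambda1_iff hn hHψ.1 1).mp (hψ_eig z₀ hz₀)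
    have h1 : (complexHessian ψ z₀ - ((1 : ℝ) : ℂ) • 1).PosSemidef :=
      (eigenvalues_le_iff hHψ.1 1).mpr heigψ
    have h2 : ((B : ℂ) • (complexHessian ψ z₀ - ((1 : ℝ) : ℂ) • 1)).PosSemidef :=
      posSemidef_real_smul h1 (le_of_lt (lt_of_lt_of_le hc hcB))
    have h3 : (((B - c : ℝ) : ℂ) • (1 : Matrix (Fin n) (Fin n) ℂ)).PosSemidef :=
      posSemidef_real_smul Matrix.PosSemidef.one (by linarith)
    have hsum : (complexHessian φ z₀ - (c : ℂ) • 1).PosSemidef := by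
      have heq : complexHessian φ z₀ - (c : ℂ) • 1
          = complexHessian q z₀ + (((B : ℂ) • (complexHessian ψ z₀ - ((1 : ℝ) : ℂ) • 1))
            + ((B - c : ℝ) : ℂ) • (1 : Matrix (Fin n) (Fin n) ℂ)) := by
        rw [hdec]
        push_cast
        module
      rw [heq]
      exact hHq.add (h2.add h3)
    exact (le_lambda1_iff hn hA c).mpr ((eigenvalues_le_iff hA c).mp hsum)

end
end
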